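/- arXiv:2205.00114 — 2 statements merged into one kernel-verified Lean document; each statement's English description precedes it below -/
import Mathlib

section
/- An element x of the ring R̄ of Colombeau generalized real numbers is invertible if and only if there exists r ∈ ℝ such that some (equivalently, every) representative (x_ε) satisfies |x_ε| > ε^r for all sufficiently small ε. -/
noncomputable section

open Real

/-- `P ε` holds for all sufficiently small `ε ∈ (0,1]`. -/
def SmallEv (P : ℝ → Prop) : Prop :=
  ∃ η : ℝ, 0 < η ∧ ∀ ε : ℝ, 0 < ε → ε ≤ η → P ε

/-- A net `x : (0,1] → ℝ` (modeled on all of `ℝ`) is moderate. -/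
def Moderate (x : ℝ → ℝ) : Prop :=
  ∃ r : ℝ, SmallEv fun ε => |x ε| < ε ^ r

/-- A net is negligible. -/
def Negligible (x : ℝ → ℝ) : Prop :=
  ∀ n : ℕ, SmallEv fun ε => |x ε| < ε ^ (n : ℝ)

lemma smallEv_and {P Q : ℝ → Prop} (hP : SmallEv P) (hQ : SmallEv Q) :
    SmallEv fun ε => P ε ∧ Q ε := by
  obtain ⟨a, ha, hP⟩ := hP
  obtain ⟨b, hb, hQ⟩ := hQ
  exact ⟨min a b, lt_min ha hb, fun ε hε hle =>
    ⟨hP ε hε (hle.trans (min_le_left _ _)), hQ ε hε (hle.trans (min_le_right _ _))⟩⟩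

lemma moderate_zero : Moderate (0 : ℝ → ℝ) :=
  ⟨0, 1, one_pos, fun ε hε _ => by simp⟩

lemma moderate_one : Moderate (1 : ℝ → ℝ) := by
  refine ⟨-1, 1/2, by norm_num, fun ε hε hle => ?_⟩
  have h1 : ε < 1 := lt_of_le_of_lt hle (by norm_num)
  show |(1 : ℝ → ℝ) ε| < ε ^ (-1 : ℝ)
  rw [Real.rpow_neg_one]
  simpa using (one_lt_inv₀ hε).mpr h1

lemma moderate_neg {x : ℝ → ℝ} (hx : Moderate x) : Moderate (-x) := by
  obtain ⟨r, η, hη, h⟩ := hx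
  exact ⟨r, η, hη, fun ε hε hle => by simpa using h ε hε hle⟩

lemma moderate_add {x y : ℝ → ℝ} (hx : Moderate x) (hy : Moderate y) :
    Moderate (x + y) := by
  obtain ⟨r, hr⟩ := hx
  obtain ⟨s, hs⟩ := hy
  obtain ⟨η, hη, h⟩ := smallEv_and hr hs
  refine ⟨min r s - 1, min η (1/2), lt_min hη (by norm_num), fun ε hε hle => ?_⟩
  have hεhalf : ε ≤ 1/2 := hle.trans (min_le_right _ _)
  have hε1 : ε ≤ 1 := hεhalf.trans (by norm_num)
  obtain ⟨h1, h2⟩ := h ε hε (hle.trans (min_le_left _ _))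
  have h2inv : (2 : ℝ) ≤ ε⁻¹ := by
    rw [le_inv_comm₀ (by norm_num) hε]
    linarith
  calc |(x + y) ε| ≤ |x ε| + |y ε| := abs_add_le _ _
    _ < ε ^ r + ε ^ s := add_lt_add h1 h2
    _ ≤ ε ^ min r s + ε ^ min r s :=
        add_le_add (Real.rpow_le_rpow_of_exponent_ge hε hε1 (min_le_left _ _))
          (Real.rpow_le_rpow_of_exponent_ge hε hε1 (min_le_right _ _))
    _ = 2 * ε ^ min r s := by ring
    _ ≤ ε⁻¹ * ε ^ min r s :=
        mul_le_mul_of_nonneg_right h2inv (Real.rpow_nonneg hε.le _)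
    _ = ε ^ (min r s - 1) := by
        rw [← Real.rpow_neg_one ε, ← Real.rpow_add hε]
        ring_nf

lemma moderate_mul {x y : ℝ → ℝ} (hx : Moderate x) (hy : Moderate y) :
    Moderate (x * y) := by
  obtain ⟨r, hr⟩ := hx
  obtain ⟨s, hs⟩ := hy
  obtain ⟨η, hη, h⟩ := smallEv_and hr hs
  refine ⟨r + s, η, hη, fun ε hε hle => ?_⟩
  obtain ⟨h1, h2⟩ := h ε hε hle
  have : |(x * y) ε| = |x ε| * |y ε| := by simp [abs_mul]
  rw [this, Real.rpow_add hε]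
  exact mul_lt_mul'' h1 h2 (abs_nonneg _) (abs_nonneg _)

/-- The ring `E_M` of moderate nets, as a subring of `ℝ → ℝ`. -/
def EMring : Subring (ℝ → ℝ) where
  carrier := {x | Moderate x}
  mul_mem' := moderate_mul
  one_mem' := moderate_one
  add_mem' := moderate_add
  zero_mem' := moderate_zero
  neg_mem' := moderate_neg

lemma negligible_zero : Negligible (0 : ℝ → ℝ) := fun n =>
  ⟨1, one_pos, fun ε hε _ => by simpa using Real.rpow_pos_of_pos hε (n : ℝ)⟩

lemma negligible_add {x y : ℝ → ℝ} (hx : Negligible x) (hy : Negligible y) :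
    Negligible (x + y) := by
  intro n
  obtain ⟨η, hη, h⟩ := smallEv_and (hx (n + 1)) (hy (n + 1))
  refine ⟨min η (1/2), lt_min hη (by norm_num), fun ε hε hle => ?_⟩
  have hεhalf : ε ≤ 1/2 := hle.trans (min_le_right _ _)
  obtain ⟨h1, h2⟩ := h ε hε (hle.trans (min_le_left _ _))
  have hcast : ((n + 1 : ℕ) : ℝ) = (n : ℝ) + 1 := by push_cast; ring
  have hsplit : ε ^ ((n + 1 : ℕ) : ℝ) = ε ^ (n : ℝ) * ε := by
    rw [hcast, Real.rpow_add hε, Real.rpow_one]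
  calc |(x + y) ε| ≤ |x ε| + |y ε| := abs_add_le _ _
    _ < ε ^ ((n + 1 : ℕ) : ℝ) + ε ^ ((n + 1 : ℕ) : ℝ) := add_lt_add h1 h2
    _ = (2 * ε) * ε ^ (n : ℝ) := by rw [hsplit]; ring
    _ ≤ 1 * ε ^ (n : ℝ) := by
        apply mul_le_mul_of_nonneg_right _ (Real.rpow_nonneg hε.le _)
        linarith
    _ = ε ^ (n : ℝ) := one_mul _

lemma negligible_smul {x y : ℝ → ℝ} (hx : Moderate x) (hy : Negligible y) :
    Negligible (x * y) := by
  intro n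
  obtain ⟨r, hr⟩ := hx
  set k : ℕ := n + Nat.ceil (max 0 (-r)) with hk
  obtain ⟨η, hη, h⟩ := smallEv_and hr (hy k)
  refine ⟨min η 1, lt_min hη one_pos, fun ε hε hle => ?_⟩
  have hε1 : ε ≤ 1 := hle.trans (min_le_right _ _)
  obtain ⟨h1, h2⟩ := h ε hε (hle.trans (min_le_left _ _))
  have hexp : (n : ℝ) ≤ r + (k : ℝ) := by
    have h1' : (-r) ≤ (Nat.ceil (max 0 (-r)) : ℝ) :=
      le_trans (le_max_right 0 (-r)) (Nat.le_ceil _)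
    have : (k : ℝ) = (n : ℝ) + (Nat.ceil (max 0 (-r)) : ℝ) := by
      rw [hk]; push_cast; ring
    linarith
  show |(x * y) ε| < ε ^ (n : ℝ)
  have hxy : |(x * y) ε| = |x ε| * |y ε| := by simp [abs_mul]
  rw [hxy]
  calc |x ε| * |y ε| < ε ^ r * ε ^ (k : ℝ) :=
        mul_lt_mul'' h1 h2 (abs_nonneg _) (abs_nonneg _)
    _ = ε ^ (r + (k : ℝ)) := (Real.rpow_add hε _ _).symm
    _ ≤ ε ^ (n : ℝ) := Real.rpow_le_rpow_of_exponent_ge hε hε1 hexp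

/-- The ideal of negligible nets inside `E_M`. -/
def NegIdeal : Ideal EMring where
  carrier := {x | Negligible x.1}
  add_mem' := fun hx hy => negligible_add hx hy
  zero_mem' := negligible_zero
  smul_mem' := fun c _ hx => negligible_smul c.2 hx

/-- The ring of Colombeau generalized real numbers. -/
abbrev Rbar := EMring ⧸ NegIdeal

/-- Class of a moderate net in `R̄`. -/
def mkR (x : EMring) : Rbar := Ideal.Quotient.mk NegIdeal x

/-- The valuation `V` on the quotient. -/
def VQ (x : Rbar) : ℝ :=
  sSup {r : ℝ | ∃ x' : EMring, mkR x' = x ∧ SmallEv fun ε => |x'.1 ε| < ε ^ r}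

open Classical in
/-- sharp norm on `R̄`. -/
def normQ (x : Rbar) : ℝ := if x = 0 then 0 else Real.exp (-(VQ x))

/-- sharp distance on `R̄`. -/
def sharpDist (x y : Rbar) : ℝ := normQ (x - y)

/-- `x` is nonnegative: it has a representative which is nonnegative on `(0,1]`. -/
def NonnegQ (x : Rbar) : Prop :=
  ∃ x' : EMring, mkR x' = x ∧ ∀ ε : ℝ, 0 < ε → ε ≤ 1 → 0 ≤ x'.1 ε

/-- `x` belongs to `V_r(0)`: some representative satisfies `|x_ε| < ε^r` eventually. -/
def InVr (r : ℝ) (x : Rbar) : Prop :=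
  ∃ x' : EMring, mkR x' = x ∧ SmallEv fun ε => |x'.1 ε| < ε ^ r

/-- `x ≥ α^m`: some representative satisfies `x_ε ≥ ε^m` eventually. -/
def GeAlpha (m : ℝ) (x : Rbar) : Prop :=
  ∃ x' : EMring, mkR x' = x ∧ SmallEv fun ε => ε ^ m ≤ x'.1 ε

lemma idNet_moderate : Moderate (fun ε : ℝ => ε) := by
  refine ⟨0, 1/2, by norm_num, fun ε hε hle => ?_⟩
  show |ε| < ε ^ (0 : ℝ)
  rw [Real.rpow_zero, abs_of_pos hε]
  linarith

/-- The generalized number `α = [ε ↦ ε]`. -/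
def alphaQ : Rbar := mkR ⟨fun ε => ε, idNet_moderate⟩

lemma chi_moderate (S : Set ℝ) : Moderate (S.indicator fun _ => (1 : ℝ)) := by
  refine ⟨-1, 1/2, by norm_num, fun ε hε hle => ?_⟩
  have h1 : ε < 1 := lt_of_le_of_lt hle (by norm_num)
  have hlt : (1 : ℝ) < ε ^ (-1 : ℝ) := by
    rw [Real.rpow_neg_one]
    exact (one_lt_inv₀ hε).mpr h1
  by_cases h : ε ∈ S <;> simp [Set.indicator, h] <;> linarith [hlt]

/-- Hypernatural numbers: moderate nets with values in `ℕ`. -/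
def HyperNat : Type := {f : ℝ → ℕ // Moderate fun ε => (f ε : ℝ)}

/-- Strict order on hypernaturals: eventually pointwise. -/
def HNlt (m n : HyperNat) : Prop := SmallEv fun ε => m.1 ε < n.1 ε

/-!
If `ε ^ r < |x_ε|` for small `ε`, then `1 / x_ε` is moderate (bounded by `ε ^ (-r)`) and
`x_ε * (1 / x_ε) - 1` vanishes for small `ε`, so `[1 / x_ε]` inverts `[x_ε]`. Conversely, if
`[x_ε] [y_ε] = 1` then `x_ε y_ε` is a negligible perturbation of `1`, hence bounded below by a
power of `ε`, and the moderate bound `|y_ε| < ε ^ s` transfers this to `|x_ε|`. A lower bound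
`ε ^ r` survives any negligible perturbation as `ε ^ (r + 1)`, which makes the exponent uniform
over all representatives.
-/

namespace SmallEv

lemma mono {P Q : ℝ → Prop} (h : SmallEv P) (hPQ : ∀ ε, 0 < ε → P ε → Q ε) : SmallEv Q := by
  obtain ⟨η, hη, hP⟩ := h
  exact ⟨η, hη, fun ε hε hle => hPQ ε hε (hP ε hε hle)⟩

lemma le_const {c : ℝ} (hc : 0 < c) : SmallEv fun ε => ε ≤ c :=
  ⟨c, hc, fun _ _ hle => hle⟩

end SmallEv

lemma Negligible.smallEv_abs_lt_rpow {x : ℝ → ℝ} (hx : Negligible x) (s : ℝ) :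
    SmallEv fun ε => |x ε| < ε ^ s := by
  obtain ⟨n, hn⟩ := exists_nat_ge s
  refine (smallEv_and (hx n) (SmallEv.le_const one_pos)).mono fun ε hε ⟨hlt, hle⟩ => ?_
  exact hlt.trans_le (Real.rpow_le_rpow_of_exponent_ge hε hle hn)

lemma negligible_of_smallEv_eq_zero {x : ℝ → ℝ} (hx : SmallEv fun ε => x ε = 0) :
    Negligible x := fun n =>
  hx.mono fun ε hε h0 => by simpa [h0] using Real.rpow_pos_of_pos hε (n : ℝ)

lemma mkR_eq_mkR_iff {a b : EMring} : mkR a = mkR b ↔ Negligible (a.1 - b.1) :=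
  Ideal.Quotient.eq

lemma mkR_surjective : Function.Surjective mkR :=
  Ideal.Quotient.mk_surjective

lemma mkR_one : mkR 1 = 1 :=
  map_one _

lemma mkR_mul (a b : EMring) : mkR (a * b) = mkR a * mkR b :=
  map_mul _ _ _

def StrictlyNonzero (x : ℝ → ℝ) : Prop :=
  ∃ r : ℝ, SmallEv fun ε => ε ^ r < |x ε|

lemma strictlyNonzero_one : StrictlyNonzero 1 :=
  ⟨1, (SmallEv.le_const one_half_pos).mono fun ε _ hle => by
    rw [Real.rpow_one, Pi.one_apply, abs_one]
    linarith⟩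

lemma smallEv_rpow_lt_abs_of_negligible_sub {x y : ℝ → ℝ} {r : ℝ}
    (hx : SmallEv fun ε => ε ^ r < |x ε|) (hxy : Negligible (x - y)) :
    SmallEv fun ε => ε ^ (r + 1) < |y ε| := by
  refine (smallEv_and (smallEv_and hx (hxy.smallEv_abs_lt_rpow (r + 1)))
    (SmallEv.le_const one_half_pos)).mono fun ε hε ⟨⟨hlow, hdiff⟩, hle⟩ => ?_
  have hsplit : ε ^ (r + 1) = ε ^ r * ε := Real.rpow_add_one hε.ne' r
  have hpow : 0 < ε ^ r := Real.rpow_pos_of_pos hε r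
  have htri : |x ε| - |x ε - y ε| ≤ |y ε| := by
    linarith [abs_sub_abs_le_abs_sub (x ε) (y ε)]
  have hdiff' : |x ε - y ε| < ε ^ r * ε := hsplit ▸ hdiff
  -- `ε ^ r - ε ^ (r + 1) ≥ ε ^ (r + 1)` because `ε ≤ 1/2`
  rw [hsplit]
  nlinarith

lemma StrictlyNonzero.of_negligible_sub {x y : ℝ → ℝ} (hx : StrictlyNonzero x)
    (hxy : Negligible (x - y)) : StrictlyNonzero y :=
  let ⟨r, hr⟩ := hx
  ⟨r + 1, smallEv_rpow_lt_abs_of_negligible_sub hr hxy⟩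

lemma StrictlyNonzero.of_mul_moderate {x y : ℝ → ℝ} (hxy : StrictlyNonzero (x * y))
    (hy : Moderate y) : StrictlyNonzero x := by
  obtain ⟨r, hr⟩ := hxy
  obtain ⟨s, hs⟩ := hy
  refine ⟨r - s, (smallEv_and hr hs).mono fun ε hε ⟨hlow, hup⟩ => ?_⟩
  have hpow : 0 < ε ^ s := Real.rpow_pos_of_pos hε s
  rw [Real.rpow_sub hε, div_lt_iff₀ hpow]
  calc ε ^ r < |x ε| * |y ε| := by rwa [Pi.mul_apply, abs_mul] at hlow
    _ ≤ |x ε| * ε ^ s := mul_le_mul_of_nonneg_left hup.le (abs_nonneg _)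

lemma StrictlyNonzero.smallEv_ne_zero {x : ℝ → ℝ} (hx : StrictlyNonzero x) :
    SmallEv fun ε => x ε ≠ 0 :=
  let ⟨r, hr⟩ := hx
  hr.mono fun _ hε hlt => abs_pos.mp ((Real.rpow_pos_of_pos hε r).trans hlt)

lemma StrictlyNonzero.moderate_inv {x : ℝ → ℝ} (hx : StrictlyNonzero x) : Moderate x⁻¹ := by
  obtain ⟨r, hr⟩ := hx
  refine ⟨-r, hr.mono fun ε hε hlt => ?_⟩
  have hpow : 0 < ε ^ r := Real.rpow_pos_of_pos hε r
  rw [Pi.inv_apply, abs_inv, Real.rpow_neg hε.le]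
  exact (inv_lt_inv₀ (hpow.trans hlt) hpow).mpr hlt

lemma isUnit_mkR_iff {a : EMring} : IsUnit (mkR a) ↔ StrictlyNonzero a.1 := by
  constructor
  · intro hunit
    obtain ⟨b, hb⟩ := hunit.exists_right_inv
    obtain ⟨y, rfl⟩ := mkR_surjective b
    have hprod : mkR 1 = mkR (a * y) := by rw [mkR_one, mkR_mul, hb]
    exact (strictlyNonzero_one.of_negligible_sub (mkR_eq_mkR_iff.mp hprod)).of_mul_moderate y.2
  · intro hx
    let y : EMring := ⟨a.1⁻¹, hx.moderate_inv⟩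
    have hinv : mkR (a * y) = mkR 1 :=
      mkR_eq_mkR_iff.mpr <| negligible_of_smallEv_eq_zero <|
        hx.smallEv_ne_zero.mono fun _ _ hne => by
          simp [y, mul_inv_cancel₀ hne]
    exact IsUnit.of_mul_eq_one (mkR y) (by rwa [mkR_mul, mkR_one] at hinv)

/-- `x ∈ R̄` is invertible iff some (equivalently every) representative
satisfies `|x_ε| > ε^r` for some `r` and all sufficiently small `ε`. -/
theorem isUnit_iff_representative_bounded_below :
    ∀ x : Rbar,
      (IsUnit x ↔ ∃ (x' : EMring) (r : ℝ), mkR x' = x ∧ SmallEv fun ε => ε ^ r < |x'.1 ε|) ∧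
      (IsUnit x ↔ ∃ r : ℝ, ∀ x' : EMring, mkR x' = x → SmallEv fun ε => ε ^ r < |x'.1 ε|) := by
  intro x
  obtain ⟨a, rfl⟩ := mkR_surjective x
  rw [isUnit_mkR_iff]
  constructor
  · constructor
    · rintro ⟨r, hr⟩
      exact ⟨a, r, rfl, hr⟩
    · rintro ⟨b, r, hba, hr⟩
      exact StrictlyNonzero.of_negligible_sub ⟨r, hr⟩ (mkR_eq_mkR_iff.mp hba)
  · constructor
    · rintro ⟨r, hr⟩
      exact ⟨r + 1, fun b hba =>
        smallEv_rpow_lt_abs_of_negligible_sub hr (mkR_eq_mkR_iff.mp hba.symm)⟩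
    · rintro ⟨r, hr⟩
      exact ⟨r, hr a rfl⟩
end
end

section
/- The nontrivial idempotents of the ring R̄ of Colombeau generalized real numbers are exactly the classes [χ_S] of characteristic functions of subsets S ⊆ (0,1] such that 0 lies in the topological closure (in ℝ) of both S and its complement (0,1] \ S. -/
noncomputable section

open Real

/-! If `e = [x]` is idempotent then `x² - x` is negligible, and since
`|x - χ_S| ≤ 2|x² - x|` for `S = {x ≥ 1/2}`, `e = [χ_S]`. A class `[χ_S]` is `0` (resp. `1`)
exactly when `χ_S` vanishes (resp. equals `1`) on some interval `(0, η]`, i.e. when `0` is not in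
the closure of `S` (resp. of `(0,1] \ S`). -/
open Filter Topology Set

theorem smallEv_iff_eventually {P : ℝ → Prop} : SmallEv P ↔ ∀ᶠ ε in 𝓝[>] 0, P ε := by
  rw [Filter.Eventually, mem_nhdsGT_iff_exists_Ioc_subset]
  exact ⟨fun ⟨η, hη, h⟩ => ⟨η, hη, fun ε hε => h ε hε.1 hε.2⟩,
    fun ⟨η, hη, h⟩ => ⟨η, hη, fun ε hε hle => h ⟨hε, hle⟩⟩⟩

theorem zero_notMem_closure_iff_smallEv {S : Set ℝ} (hS : S ⊆ Ioi 0) :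
    (0 : ℝ) ∉ closure S ↔ SmallEv (· ∉ S) := by
  rw [smallEv_iff_eventually, mem_closure_iff_frequently, not_frequently,
    eventually_nhdsWithin_iff]
  exact eventually_congr <| .of_forall fun ε =>
    ⟨fun h _ => h, fun h hε => h (hS hε) hε⟩

theorem Negligible.of_abs_le {x y : ℝ → ℝ} (hy : Negligible y)
    (h : SmallEv fun ε => |x ε| ≤ |y ε|) : Negligible x := fun n => by
  rw [smallEv_iff_eventually] at h ⊢
  filter_upwards [h, smallEv_iff_eventually.mp (hy n)] with ε hxy hy using hxy.trans_lt hy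

theorem negligible_indicator_iff {S : Set ℝ} :
    Negligible (S.indicator fun _ => 1) ↔ SmallEv (· ∉ S) := by
  refine ⟨fun h => ?_, fun h => negligible_zero.of_abs_le ?_⟩
  · obtain ⟨η, hη, h⟩ := h 0
    refine ⟨η, hη, fun ε hε hle hεS => ?_⟩
    simpa [indicator_of_mem hεS] using h ε hε hle
  · obtain ⟨η, hη, h⟩ := h
    exact ⟨η, hη, fun ε hε hle => by simp [indicator_of_notMem (h ε hε hle)]⟩

def indicatorClass (S : Set ℝ) : Rbar := mkR ⟨S.indicator fun _ => 1, chi_moderate S⟩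

theorem indicatorClass_mul_self (S : Set ℝ) :
    indicatorClass S * indicatorClass S = indicatorClass S := by
  rw [indicatorClass, mkR, ← map_mul]
  congr 2
  ext ε
  by_cases h : ε ∈ S <;> simp [h]

theorem indicatorClass_eq_zero_iff {S : Set ℝ} (hS : S ⊆ Ioi 0) :
    indicatorClass S = 0 ↔ (0 : ℝ) ∉ closure S := by
  rw [zero_notMem_closure_iff_smallEv hS, ← negligible_indicator_iff]
  exact Ideal.Quotient.eq_zero_iff_mem

theorem indicatorClass_eq_one_iff (S : Set ℝ) :
    indicatorClass S = 1 ↔ (0 : ℝ) ∉ closure (Ioc 0 1 \ S) := by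
  have hcompl : (1 : ℝ → ℝ) - S.indicator (fun _ => 1) = Sᶜ.indicator fun _ => 1 :=
    (indicator_compl S 1).symm
  have hmem : ∀ᶠ ε in 𝓝[>] (0 : ℝ), ε ∈ Ioc (0 : ℝ) 1 := Ioc_mem_nhdsGT one_pos
  rw [zero_notMem_closure_iff_smallEv (sdiff_subset.trans Ioc_subset_Ioi_self),
    smallEv_iff_eventually, ← map_one (Ideal.Quotient.mk NegIdeal), eq_comm, indicatorClass, mkR,
    Ideal.Quotient.eq]
  change Negligible (1 - S.indicator fun _ => 1) ↔ _
  rw [hcompl, negligible_indicator_iff, smallEv_iff_eventually]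
  refine eventually_congr (hmem.mono fun ε hε => ?_)
  simp [hε]

theorem abs_sub_ite_le_two_mul_abs_mul_self_sub (a : ℝ) :
    |a - if 1 / 2 ≤ a then 1 else 0| ≤ 2 * |a * a - a| := by
  have hfac : |a * a - a| = |a| * |a - 1| := by rw [← abs_mul]; ring_nf
  rw [hfac]
  split_ifs with h
  · have : 1 ≤ 2 * |a| := by linarith [le_abs_self a]
    nlinarith [abs_nonneg (a - 1)]
  · have : 1 ≤ 2 * |a - 1| := by rw [abs_sub_comm]; linarith [le_abs_self (1 - a)]
    rw [sub_zero]
    nlinarith [abs_nonneg a]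

theorem exists_indicatorClass_eq_of_mul_self_eq {e : Rbar} (he : e * e = e) :
    ∃ S ⊆ Ioc 0 1, e = indicatorClass S := by
  obtain ⟨x, rfl⟩ := Ideal.Quotient.mk_surjective e
  have hx : x * x - x ∈ NegIdeal := Ideal.Quotient.eq.mp (by rwa [map_mul])
  let S := {t ∈ Ioc 0 1 | 1 / 2 ≤ x.1 t}
  refine ⟨S, fun t ht => ht.1, Ideal.Quotient.eq.mpr ?_⟩
  refine (negligible_add hx hx).of_abs_le ⟨1, one_pos, fun ε hε hle => ?_⟩
  have hχ : S.indicator (fun _ => (1 : ℝ)) ε = if 1 / 2 ≤ x.1 ε then 1 else 0 := by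
    simp [S, indicator, hε, hle]
  change |x.1 ε - S.indicator (fun _ => 1) ε| ≤ |(x.1 * x.1 - x.1 + (x.1 * x.1 - x.1)) ε|
  rw [hχ, Pi.add_apply, ← two_mul, abs_mul, abs_two]
  exact abs_sub_ite_le_two_mul_abs_mul_self_sub _

/-- the nontrivial idempotents of `R̄` are exactly the classes of
characteristic functions `χ_S` of sets `S ⊆ (0,1]` with `0` in the closure of both
`S` and `(0,1] \\ S`. -/
theorem nontrivial_idempotents_are_characteristic_functions :
    ∀ e : Rbar,
      (e * e = e ∧ e ≠ 0 ∧ e ≠ 1) ↔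
      ∃ S : Set ℝ, S ⊆ Set.Ioc (0 : ℝ) 1 ∧
        e = mkR ⟨S.indicator fun _ => (1 : ℝ), chi_moderate S⟩ ∧
        (0 : ℝ) ∈ closure S ∧ (0 : ℝ) ∈ closure (Set.Ioc (0 : ℝ) 1 \ S) := by
  intro e
  constructor
  · rintro ⟨he, he0, he1⟩
    obtain ⟨S, hS, rfl⟩ := exists_indicatorClass_eq_of_mul_self_eq he
    rw [Ne, indicatorClass_eq_zero_iff (hS.trans Ioc_subset_Ioi_self), not_not] at he0
    rw [Ne, indicatorClass_eq_one_iff, not_not] at he1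
    exact ⟨S, hS, rfl, he0, he1⟩
  · rintro ⟨S, hS, rfl, h0, h1⟩
    exact ⟨indicatorClass_mul_self S,
      (indicatorClass_eq_zero_iff (hS.trans Ioc_subset_Ioi_self)).not.mpr (not_not.mpr h0),
      (indicatorClass_eq_one_iff S).not.mpr (not_not.mpr h1)⟩
end
end
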